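/- Let p ∈ ℂ[x,y] be a nonzero polynomial, let k ≥ 2 be an integer, let c be a nonzero complex number, let a be a nonzero complex number, and let n be a positive integer. Suppose the leading quasi-homogeneous part of p with respect to the weights (deg x = 1, deg y = k) equals a·(c·x^k + y)^n. Then the polynomial q(x,y) = p(x, y − c·x^k) has total degree strictly smaller than the total degree of p. -/
import Mathlib


open MvPolynomial

/-- The weighted degree of `r ∈ ℂ[x,y]` with respect to the weights `deg x = l`,
`deg y = k`: the maximum of `l·i + k·j` over monomials `x^i y^j` of `r`. -/
noncomputable def wdeg (k l : ℕ) (r : MvPolynomial (Fin 2) ℂ) : ℕ :=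
  r.weightedTotalDegree ![l, k]

/-- The leading quasi-homogeneous part of `r ∈ ℂ[x,y]` with respect to the weights
`(k, l)`: the sum of the monomials `a_{ij} x^i y^j` of `r` with `l·i + k·j` maximal. -/
noncomputable def leadingPart (k l : ℕ) (r : MvPolynomial (Fin 2) ℂ) :
    MvPolynomial (Fin 2) ℂ :=
  ∑ s ∈ r.support.filter (fun s => l * s 0 + k * s 1 = wdeg k l r),
    monomial s (coeff s r)

lemma weight_eq (k : ℕ) (s : Fin 2 →₀ ℕ) : (Finsupp.weight ![1, k] s) = s 0 + k * s 1 := by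
  rw [Finsupp.weight_apply, Finsupp.sum_fintype]
  · simp [Fin.sum_univ_two, mul_comm]
  · intro i; simp

lemma coeff_leadingPart (k : ℕ) (p : MvPolynomial (Fin 2) ℂ) (t : Fin 2 →₀ ℕ) :
    coeff t (leadingPart k 1 p) =
      if 1 * t 0 + k * t 1 = wdeg k 1 p ∧ t ∈ p.support then coeff t p else 0 := by
  rw [leadingPart, coeff_sum]
  simp only [coeff_monomial]
  rw [Finset.sum_ite_eq' _ t (fun s => coeff s p)]
  simp [Finset.mem_filter, and_comm]

lemma pow_expand (k n : ℕ) (c : ℂ) :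
    (C c * X 0 ^ k + X 1 : MvPolynomial (Fin 2) ℂ) ^ n =
      ∑ m ∈ Finset.range (n + 1),
        monomial (Finsupp.single 0 (k * m) + Finsupp.single 1 (n - m))
          (c ^ m * (n.choose m : ℂ)) := by
  rw [add_pow]
  refine Finset.sum_congr rfl fun m hm => ?_
  have h : ((n.choose m : ℕ) : MvPolynomial (Fin 2) ℂ) = C ((n.choose m : ℕ) : ℂ) := by
    simp
  rw [h, mul_pow, ← C_pow, ← pow_mul, X_pow_eq_monomial, X_pow_eq_monomial,
    C_mul_monomial, monomial_mul, mul_comm _ (C _), C_mul_monomial]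
  ring_nf

lemma coeff_y (k n : ℕ) (hk : 1 ≤ k) (c a : ℂ) :
    coeff (Finsupp.single (1 : Fin 2) n) (C a * (C c * X 0 ^ k + X 1 : MvPolynomial (Fin 2) ℂ) ^ n) = a := by
  rw [coeff_C_mul, pow_expand, coeff_sum]
  simp only [coeff_monomial]
  rw [Finset.sum_eq_single_of_mem 0 (Finset.mem_range.2 (Nat.succ_pos n))]
  · simp
  · intro b hb hb0
    rw [if_neg]
    intro h
    have := DFunLike.congr_fun h 0
    simp [Finsupp.single_apply] at this
    exact hb0 (by omega)

lemma coeff_x (k n : ℕ) (c a : ℂ) :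
    coeff (Finsupp.single (0 : Fin 2) (k * n)) (C a * (C c * X 0 ^ k + X 1 : MvPolynomial (Fin 2) ℂ) ^ n)
      = a * c ^ n := by
  rw [coeff_C_mul, pow_expand, coeff_sum]
  simp only [coeff_monomial]
  rw [Finset.sum_eq_single_of_mem n (Finset.mem_range.2 (Nat.lt_succ_self n))]
  · simp
  · intro b hb hbn
    rw [if_neg]
    intro h
    have := DFunLike.congr_fun h 1
    have hb' := Finset.mem_range.1 hb
    simp [Finsupp.single_apply] at this
    exact hbn (by omega)

lemma sum_eq (s : Fin 2 →₀ ℕ) : (s.sum fun _ e => e) = s 0 + s 1 := by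
  rw [Finsupp.sum_fintype]
  · simp [Fin.sum_univ_two]
  · intro i; rfl

lemma aeval_deg_le (k : ℕ) (hk : 1 ≤ k) (c : ℂ) (r : MvPolynomial (Fin 2) ℂ) (d : ℕ)
    (h : ∀ s ∈ r.support, s 0 + k * s 1 ≤ d) :
    (aeval ![X 0, X 1 - C c * X 0 ^ k] r).totalDegree ≤ d := by
  conv_lhs => rw [r.as_sum]
  rw [map_sum]
  refine (totalDegree_finset_sum _ _).trans (Finset.sup_le fun s hs => ?_)
  rw [aeval_monomial]
  have hprod : (s.prod fun i e => (![X 0, X 1 - C c * X 0 ^ k] : Fin 2 → MvPolynomial ℕ ℂ) i ^ e)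
      = X 0 ^ s 0 * (X 1 - C c * X 0 ^ k) ^ s 1 := by
    rw [Finsupp.prod_fintype]
    · simp [Fin.prod_univ_two]
    · intro i; rfl
  rw [hprod]
  refine (totalDegree_mul _ _).trans ?_
  rw [algebraMap_eq, totalDegree_C, zero_add]
  refine (totalDegree_mul _ _).trans (le_trans (add_le_add ?_ ?_) (h s hs))
  · exact (totalDegree_X_pow _ _).le
  · refine le_trans (totalDegree_pow _ _) ?_
    have hk' : (X 1 - C c * X 0 ^ k : MvPolynomial ℕ ℂ).totalDegree ≤ k := by
      rw [sub_eq_add_neg]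
      refine (totalDegree_add _ _).trans (max_le ?_ ?_)
      · simpa [totalDegree_X] using hk
      · rw [totalDegree_neg]
        refine (totalDegree_mul _ _).trans ?_
        simp [totalDegree_C, totalDegree_X_pow]
    calc s 1 * (X 1 - C c * X 0 ^ k : MvPolynomial ℕ ℂ).totalDegree
        ≤ s 1 * k := Nat.mul_le_mul_left _ hk'
      _ = k * s 1 := mul_comm _ _

/-- De Jonquières degree-reduction step: if the leading quasi-homogeneous part of
`p ∈ ℂ[x,y]` with respect to the weights `deg x = 1`, `deg y = k` (with `k ≥ 2`) equals
`a·(c·x^k + y)^n` with `a, c ≠ 0` and `n ≥ 1`, then `q(x,y) = p(x, y - c·x^k)` has total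
degree strictly smaller than that of `p`. -/
theorem de_jonquieres_degree_reduction
    (p : MvPolynomial (Fin 2) ℂ) (hp : p ≠ 0)
    (k : ℕ) (hk : 2 ≤ k) (c a : ℂ) (hc : c ≠ 0) (ha : a ≠ 0) (n : ℕ) (hn : 0 < n)
    (hlead : leadingPart k 1 p = C a * (C c * X 0 ^ k + X 1) ^ n) :
    (aeval ![X 0, X 1 - C c * X 0 ^ k] p).totalDegree < p.totalDegree := by
  have hk1 : 1 ≤ k := by omega
  -- D = k * n
  have hy : coeff (Finsupp.single (1 : Fin 2) n) (leadingPart k 1 p) = a := by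
    rw [hlead]; exact coeff_y k n hk1 c a
  have hcond : 1 * (Finsupp.single (1 : Fin 2) n) 0 + k * (Finsupp.single (1 : Fin 2) n) 1 = wdeg k 1 p ∧
      (Finsupp.single (1 : Fin 2) n) ∈ p.support := by
    by_contra h
    have h0 : coeff (Finsupp.single (1 : Fin 2) n) (leadingPart k 1 p) = 0 := by
      rw [coeff_leadingPart]; exact if_neg h
    rw [hy] at h0; exact ha h0
  have hD : wdeg k 1 p = k * n := by
    have := hcond.1
    simpa [Finsupp.single_apply] using this.symm
  -- x^{kn} in support of p
  have hx : coeff (Finsupp.single (0 : Fin 2) (k * n)) (leadingPart k 1 p) = a * c ^ n := by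
    rw [hlead]; exact coeff_x k n c a
  have hxc : a * c ^ n ≠ 0 := mul_ne_zero ha (pow_ne_zero _ hc)
  have hxcond : (Finsupp.single (0 : Fin 2) (k * n)) ∈ p.support := by
    by_contra h
    have h0 : coeff (Finsupp.single (0 : Fin 2) (k * n)) (leadingPart k 1 p) = 0 := by
      rw [coeff_leadingPart]; exact if_neg (fun hh => h hh.2)
    rw [hx] at h0; exact hxc h0
  -- total degree of p is k*n
  have hub : ∀ s ∈ p.support, s 0 + k * s 1 ≤ k * n := by
    intro s hs
    have := le_weightedTotalDegree ![1, k] hs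
    rw [weight_eq] at this
    rw [← hD]
    exact this
  have hdegp : p.totalDegree = k * n := by
    apply le_antisymm
    · rw [totalDegree]
      refine Finset.sup_le fun s hs => ?_
      rw [sum_eq]
      have h1 := hub s hs
      have h2 : s 1 ≤ k * s 1 := Nat.le_mul_of_pos_left _ (by omega)
      omega
    · have := le_totalDegree hxcond
      rwa [sum_eq, Finsupp.single_apply, Finsupp.single_apply] at this
      -- may need simp
  -- decompose p
  have hdecomp : p = leadingPart k 1 p + (p - leadingPart k 1 p) := by ring
  have hr : ∀ s ∈ (p - leadingPart k 1 p).support, s 0 + k * s 1 ≤ k * n - 1 := by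
    intro s hs
    rw [mem_support_iff] at hs
    rw [coeff_sub, coeff_leadingPart] at hs
    by_cases hsp : s ∈ p.support
    · have hne : 1 * s 0 + k * s 1 ≠ wdeg k 1 p := by
        intro h
        rw [if_pos ⟨h, hsp⟩, sub_self] at hs
        exact hs rfl
      have := hub s hsp
      rw [hD] at hne
      omega
    · exfalso
      rw [if_neg (fun hh => hsp hh.2)] at hs
      rw [mem_support_iff, not_not] at hsp
      simp [hsp] at hs
  -- final bound
  rw [hdegp]
  conv_lhs => rw [hdecomp, map_add]
  have h2n : 2 * n ≤ k * n := Nat.mul_le_mul_right n hk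
  refine lt_of_le_of_lt ((totalDegree_add _ _).trans (max_le ?_ ?_))
    (show k * n - 1 < k * n by omega)
  · rw [hlead]
    simp only [map_mul, map_pow, map_add, aeval_C, aeval_X, Matrix.cons_val_zero,
      Matrix.cons_val_one, Matrix.head_cons]
    have e : (algebraMap ℂ (MvPolynomial ℕ ℂ) c * X 0 ^ k + (X 1 - C c * X 0 ^ k)) = X 1 := by
      rw [algebraMap_eq]; ring
    rw [e, algebraMap_eq]
    refine (totalDegree_mul _ _).trans ?_
    rw [totalDegree_C, zero_add]
    exact (totalDegree_X_pow _ _).le.trans (by omega)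
  · exact aeval_deg_le k hk1 c _ _ hr
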